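/- arXiv:1612.01965 — 4 statements merged into one kernel-verified Lean document; each statement's English description precedes it below -/
import Mathlib

section
/- Let D be a digraph on vertex set V, and let E_contr be a set of arcs of D such that the arcs of E_contr form a collection of vertex-disjoint directed paths. Let D' be the digraph obtained from D by contracting every arc of E_contr (identifying the vertices of each path to a single vertex, keeping one arc between contracted classes when present). If D' has a Hamilton cycle, then D has a Hamilton cycle. -/
/-!
List the Hamilton cycle of the contracted digraph as a cyclic sequence of classes and replace
every class by its path. The result is a cyclic list of all vertices without repetitions in which
consecutive vertices are joined either by an arc of a path or, from the end of one path to the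
start of the next, by the arc of `D` underlying the corresponding arc of the contracted digraph.
-/

/-- A Hamilton cycle in a digraph with arc relation `E`: a single cyclic
permutation of all vertices each of whose arcs is present. -/
def HamCycle {V : Type*} [Fintype V] [DecidableEq V] (E : V → V → Prop) : Prop :=
  ∃ σ : Equiv.Perm V, σ.IsCycle ∧ σ.support = Finset.univ ∧ ∀ v, E v (σ v)

namespace List

variable {α β : Type*}

def IsCyclicChain (R : α → α → Prop) (l : List α) : Prop :=
  l.IsChain R ∧ ∀ a ∈ l.getLast?, ∀ b ∈ l.head?, R a b

theorem Nodup.isCyclicChain_iff [DecidableEq α] {R : α → α → Prop} {l : List α} (hl : l.Nodup) :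
    l.IsCyclicChain R ↔ ∀ v ∈ l, R v (l.formPerm v) := by
  rcases l with _ | ⟨x, xs⟩
  · simp [IsCyclicChain]
  constructor
  · rintro ⟨hchain, hwrap⟩ v hv
    obtain ⟨i, hi, rfl⟩ := getElem_of_mem hv
    by_cases hlast : i + 1 < (x :: xs).length
    · rw [formPerm_apply_lt_getElem _ hl i hlast]
      exact isChain_iff_getElem.1 hchain i hlast
    · have hi' : (x :: xs)[i] = (x :: xs).getLast (cons_ne_nil x xs) := by
        rw [getLast_eq_getElem]
        congr 1
        simp only [length_cons] at hi hlast ⊢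
        omega
      rw [hi', formPerm_apply_getLast]
      exact hwrap _ (by simp [getLast?_eq_some_getLast]) _ rfl
  · intro h
    refine ⟨isChain_iff_getElem.2 fun i hi => ?_, ?_⟩
    · rw [← formPerm_apply_lt_getElem _ hl i hi]
      exact h _ (getElem_mem _)
    · rintro a ha b ⟨⟩
      rw [getLast?_eq_some_getLast (cons_ne_nil x xs), Option.mem_some_iff] at ha
      subst ha
      simpa using h _ (getLast_mem _)

theorem IsCyclicChain.flatMap {R : α → α → Prop} {l : List β} {f : β → List α}
    (hne : ∀ b, f b ≠ []) (hf : ∀ b ∈ l, (f b).IsChain R)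
    (hl : l.IsCyclicChain fun b c => ∀ x ∈ (f b).getLast?, ∀ y ∈ (f c).head?, R x y) :
    (l.flatMap f).IsCyclicChain R := by
  refine ⟨?_, ?_⟩
  · rw [flatMap_def, isChain_flatten (by simpa using fun b _ => (hne b).symm), isChain_map]
    exact ⟨by simpa using hf, hl.1⟩
  · rcases eq_nil_or_concat l with rfl | ⟨init, z, rfl⟩
    · simp
    rcases init with _ | ⟨w, init⟩ <;>
      simpa [getLast?_flatMap, head?_flatMap, hne, getLast?_cons] using hl.2

end List

theorem hamCycle_iff_exists_list {V : Type*} [Fintype V] [DecidableEq V] {E : V → V → Prop} :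
    HamCycle E ↔
      2 ≤ Fintype.card V ∧ ∃ l : List V, l.Nodup ∧ (∀ v, v ∈ l) ∧ ∀ v, E v (l.formPerm v) := by
  constructor
  · rintro ⟨σ, hcycle, hsupport, hE⟩
    obtain ⟨v₀, hv₀, -⟩ := id hcycle
    refine ⟨?_, σ.toList v₀, σ.nodup_toList v₀, fun v => ?_, ?_⟩
    · simpa [hsupport] using hcycle.two_le_card_support
    · have hmem : ∀ v, v ∈ σ.support := by simp [hsupport]
      exact σ.mem_toList_iff.2
        ⟨hcycle.sameCycle (σ.mem_support.1 (hmem v₀)) (σ.mem_support.1 (hmem v)), hmem v₀⟩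
    · rwa [Equiv.Perm.formPerm_toList, hcycle.cycleOf_eq hv₀]
  · rintro ⟨hcard, l, hnodup, hmem, hE⟩
    have huniv : l.toFinset = Finset.univ := Finset.eq_univ_iff_forall.2 fun v => by simp [hmem]
    have hlength : 2 ≤ l.length := by
      rwa [← List.toFinset_card_of_nodup hnodup, huniv, Finset.card_univ]
    refine ⟨l.formPerm, List.isCycle_formPerm hnodup hlength, ?_, hE⟩
    rw [List.support_formPerm_of_nodup l hnodup, huniv]
    rintro v rfl
    simp at hlength

/-- If the digraph obtained by contracting a collection of vertex-disjoint
directed paths (the classes of the partition `s`, each carrying a directed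
Hamilton path of `E`) has a Hamilton cycle, then so does the original digraph. -/
theorem stmt0 {V : Type*} [Fintype V] [DecidableEq V]
    (E : V → V → Prop) (s : Setoid V) [DecidableEq (Quotient s)] [Fintype (Quotient s)]
    (path : Quotient s → List V)
    (hnodup : ∀ c, (path c).Nodup)
    (hne : ∀ c, path c ≠ [])
    (hclass : ∀ c v, v ∈ path c ↔ Quotient.mk s v = c)
    (hchain : ∀ c, (path c).Chain' E)
    (hcontr : HamCycle (fun A B : Quotient s => A ≠ B ∧
      ∃ a b, (path A).getLast? = some a ∧ (path B).head? = some b ∧ E a b)) :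
    HamCycle E := by
  obtain ⟨hcard, L, hLnodup, hLmem, hLcycle⟩ := hamCycle_iff_exists_list.1 hcontr
  have hL : L.IsCyclicChain fun A B => ∀ a ∈ (path A).getLast?, ∀ b ∈ (path B).head?, E a b := by
    refine hLnodup.isCyclicChain_iff.2 fun A _ a ha b hb => ?_
    obtain ⟨-, a', b', ha', hb', hab⟩ := hLcycle A
    rw [Option.mem_def, ha', Option.some_inj] at ha
    rw [Option.mem_def, hb', Option.some_inj] at hb
    rwa [← ha, ← hb]
  have hMnodup : (L.flatMap path).Nodup := by
    refine List.nodup_flatMap.2 ⟨fun c _ => hnodup c, hLnodup.imp fun hAB v hvA hvB => hAB ?_⟩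
    rw [← (hclass _ v).1 hvA, ← (hclass _ v).1 hvB]
  have hMmem : ∀ v, v ∈ L.flatMap path := fun v =>
    List.mem_flatMap.2 ⟨Quotient.mk s v, hLmem _, (hclass _ v).2 rfl⟩
  have hM := hL.flatMap hne fun c _ => hchain c
  refine hamCycle_iff_exists_list.2 ⟨?_, L.flatMap path, hMnodup, hMmem, fun v => ?_⟩
  · exact hcard.trans (Fintype.card_le_of_surjective _ Quotient.mk_surjective)
  · exact hMnodup.isCyclicChain_iff.1 hM v (hMmem v)
end

section
/- Let P = (p_1, p_2, ..., p_s) be a directed path in a digraph D, and suppose indices k < l with 2 ≤ k and l ≤ s satisfy: (p_s, p_k) and (p_{k-1}, p_l) are arcs of D. Then P' = (p_1, ..., p_{k-1}, p_l, p_{l+1}, ..., p_s, p_k, p_{k+1}, ..., p_{l-1}) is a directed path in D on the same vertex set as P, with the same starting vertex p_1 and ending vertex p_{l-1}. -/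
/-!
`P'` is the concatenation of the segments `p[1..k-1]`, `p[l..s]`, `p[k..l-1]` of `P`. Each segment
is a path, the two joints are exactly the new arcs `(p (k-1), p l)` and `(p s, p k)`, and swapping
the last two segments gives back `P`, so `P'` is a rearrangement of `P`.
-/

namespace List

theorem isChain_map_range' {α : Type*} {R : α → α → Prop} (f : ℕ → α) {a n : ℕ}
    (h : ∀ i, a ≤ i → i + 1 < a + n → R (f i) (f (i + 1))) :
    ((range' a n).map f).IsChain R := by
  refine (isChain_map f).2 <| (isChain_range' a n 1).imp_of_mem_tail_imp fun i j hi hj hij => ?_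
  subst hij
  rw [tail_range'] at hj
  simp only [mem_range'_1] at hi hj
  exact h i (by omega) (by omega)

theorem range'_eq_append_range' {a b n : ℕ} (hab : a ≤ b) (hb : b ≤ a + n) :
    range' a n = range' a (b - a) ++ range' b (a + n - b) := by
  have h := range'_append_1 (s := a) (m := b - a) (n := a + n - b)
  rwa [Nat.add_sub_cancel' hab, show b - a + (a + n - b) = n by omega, eq_comm] at h

end List

theorem stmt2_general {V : Type*} (E : V → V → Prop)
    (s k l : ℕ) (p : ℕ → V)
    (hpath : ∀ i, 1 ≤ i → i < s → E (p i) (p (i + 1)))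
    (hk : 2 ≤ k) (hkl : k < l) (hls : l ≤ s)
    (h1 : E (p s) (p k)) (h2 : E (p (k - 1)) (p l)) :
    let P' : List V := (List.range' 1 (k - 1)).map p ++ (List.range' l (s - l + 1)).map p ++
      (List.range' k (l - k)).map p
    P'.Chain' E ∧ P'.Perm ((List.range' 1 s).map p) ∧
      P'.head? = some (p 1) ∧ P'.getLast? = some (p (l - 1)) := by
  intro P'
  have hA := List.isChain_map_range' (R := E) p (a := 1) (n := k - 1)
    fun i hi _ => hpath i hi (by omega)
  have hB := List.isChain_map_range' (R := E) p (a := l) (n := s - l + 1)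
    fun i _ _ => hpath i (by omega) (by omega)
  have hC := List.isChain_map_range' (R := E) p (a := k) (n := l - k)
    fun i _ _ => hpath i (by omega) (by omega)
  have hsplit : List.range' 1 s =
      List.range' 1 (k - 1) ++ (List.range' k (l - k) ++ List.range' l (s - l + 1)) := by
    rw [List.range'_eq_append_range' (b := k) (by omega) (by omega),
      List.range'_eq_append_range' (a := k) (b := l) (by omega) (by omega)]
    congr 3; omega
  have hAk : k - 1 ≠ 0 := by omega
  have hCk : l - k ≠ 0 := by omega
  have hBs : l + (s - l) = s := by omega
  have hCl : k + (l - k) - 1 = l - 1 := by omega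
  refine ⟨?_, ?_, ?_, ?_⟩
  · refine (hA.append hB ?_).append hC ?_
    · simpa [List.getLast?_range', List.head?_range', hAk]
    · simpa [List.getLast?_range', List.head?_range', hCk, hBs]
  · rw [hsplit, List.map_append, List.map_append]
    simp only [P', List.append_assoc]
    exact List.perm_append_comm.append_left _
  · simp [P', List.head?_range', hAk]
  · simp [P', List.getLast?_range', hCk, hCl]

/-- Double rotation: if `P = (p 1, ..., p s)` is a directed path in the digraph
`E` and `2 ≤ k < l ≤ s` with arcs `(p s, p k)` and `(p (k-1), p l)` present,
then `P' = (p 1,...,p (k-1), p l,...,p s, p k,...,p (l-1))` is a directed path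
on the same vertex set, with the same start `p 1` and endpoint `p (l-1)`. -/
theorem stmt2 {V : Type*} [DecidableEq V] (E : V → V → Prop)
    (s k l : ℕ) (p : ℕ → V)
    (hinj : ∀ i j, 1 ≤ i → i ≤ s → 1 ≤ j → j ≤ s → p i = p j → i = j)
    (hpath : ∀ i, 1 ≤ i → i < s → E (p i) (p (i + 1)))
    (hk : 2 ≤ k) (hkl : k < l) (hls : l ≤ s)
    (h1 : E (p s) (p k)) (h2 : E (p (k - 1)) (p l)) :
    let P' : List V := (List.range' 1 (k - 1)).map p ++ (List.range' l (s - l + 1)).map p ++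
      (List.range' k (l - k)).map p
    P'.Chain' E ∧ P'.Perm ((List.range' 1 s).map p) ∧
      P'.head? = some (p 1) ∧ P'.getLast? = some (p (l - 1)) :=
  stmt2_general E s k l p hpath hk hkl hls h1 h2
end

section
/- Let p_ℓ = (log n + (q−1) log log n − ω(n))/n with ω(n) = (1/2) log log log n, and for integer k with q−1 ≤ k ≤ 3 log n / log log n let v_k = e^{2ω(n)} (log n)^{k−q+1} / (k−1)!. Then with probability 1 − o(1) as n → ∞, the random digraph D_{n,p} with p = p_ℓ (each of the n(n−1) possible arcs present independently with probability p) has, for every such k simultaneously, at most v_k vertices of in-degree at most k, and at most v_k vertices of out-degree at most k. -/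
/-
For each `k` let `X_k` be the number of vertices of in-degree at most `k`. In-degrees of distinct
vertices depend on disjoint sets of arcs, so the events `{indeg v ≤ k}` are pairwise independent
and `E[X_k²] ≤ E X_k + (E X_k)²`, where `E X_k = n P(Bin(n-1, p) ≤ k)`. For
`k ≤ 3 log n / log log n` this binomial lower tail is at most twice its last term, and
`n e^{-np} = e^ω / (log n)^{q-1}` gives `E X_k ≤ C e^{-ω} v_k / (k+1)`. Markov's inequality for
`X_k²` then bounds `P(X_k > v_k)` by `E X_k / v_k² + C² / ((k+1)² log log n)`, which sums over `k`
to `O(1 / log log n)`; the first moment alone would only give `e^{-ω} ∑ 1/(k+1)`, which diverges.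
Out-degrees are handled symmetrically.
-/

open MeasureTheory Filter
open scoped ENNReal

/-- The random digraph `D_{n,p}`: each of the `n(n-1)` potential arcs (ordered
pairs of distinct vertices) is present independently with probability `p`
(clipped to `[0,1]`). Coordinates at loops are irrelevant. -/
noncomputable def digraphMeasure (n : ℕ) (x : ℝ) : Measure ((Fin n × Fin n) → Bool) :=
  Measure.pi fun _ => (PMF.bernoulli (min (Real.toNNReal x) 1) (min_le_right _ _)).toMeasure

def inDeg {n : ℕ} (ω : (Fin n × Fin n) → Bool) (v : Fin n) : ℕ :=
  (Finset.univ.filter fun u => u ≠ v ∧ ω (u, v) = true).card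

def outDeg {n : ℕ} (ω : (Fin n × Fin n) → Bool) (v : Fin n) : ℕ :=
  (Finset.univ.filter fun u => u ≠ v ∧ ω (v, u) = true).card

noncomputable def smallomega (n : ℕ) : ℝ := (1 / 2) * Real.log (Real.log (Real.log n))

noncomputable def pEll (q n : ℕ) : ℝ :=
  (Real.log n + ((q : ℝ) - 1) * Real.log (Real.log n) - smallomega n) / n

noncomputable def vkBound (q n k : ℕ) : ℝ :=
  Real.exp (2 * smallomega n) * Real.log n ^ (k - q + 1) / (Nat.factorial (k - 1))

open Real Finset ProbabilityTheory Function Topology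

noncomputable def binomialTerm (m j : ℕ) (p : ℝ) : ℝ := m.choose j * p ^ j * (1 - p) ^ (m - j)

noncomputable def binomialTail (m k : ℕ) (p : ℝ) : ℝ := ∑ j ∈ range (k + 1), binomialTerm m j p

lemma binomialTerm_nonneg (m j : ℕ) {p : ℝ} (hp0 : 0 ≤ p) (hp1 : p ≤ 1) :
    0 ≤ binomialTerm m j p := by
  have : 0 ≤ 1 - p := by linarith
  unfold binomialTerm; positivity

lemma sum_range_succ_le_two_mul {f : ℕ → ℝ} {k : ℕ} (h0 : 0 ≤ f 0)
    (hf : ∀ j < k, 2 * f j ≤ f (j + 1)) : ∑ j ∈ range (k + 1), f j ≤ 2 * f k := by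
  induction k with
  | zero => simp only [zero_add, range_one, sum_singleton]; linarith
  | succ k ih =>
    rw [sum_range_succ]
    linarith [ih fun j hj => hf j (by omega), hf k (by omega)]

lemma two_mul_binomialTerm_le {m j : ℕ} {p : ℝ} (hp0 : 0 ≤ p) (hp1 : p ≤ 1)
    (h : 2 * (j + 1) ≤ (m - j) * p) : 2 * binomialTerm m j p ≤ binomialTerm m (j + 1) p := by
  have hjm : j < m := by
    by_contra! hmj
    nlinarith [(Nat.cast_le (α := ℝ)).2 hmj]
  have hchoose : (m.choose (j + 1) : ℝ) * (j + 1) = m.choose j * (m - j) := by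
    have := congrArg (Nat.cast (R := ℝ)) (Nat.choose_succ_right_eq m j)
    push_cast [Nat.cast_sub hjm.le] at this
    exact this
  have h1p : 0 ≤ 1 - p := by linarith
  set X := (m.choose j : ℝ) * p ^ j * (1 - p) ^ (m - (j + 1))
  have hX : 0 ≤ X := by positivity
  have hterm : binomialTerm m j p = X * (1 - p) := by
    rw [binomialTerm, show m - j = m - (j + 1) + 1 by omega, pow_succ]; ring
  have hterm' : (j + 1 : ℝ) * binomialTerm m (j + 1) p = X * ((m - j) * p) := by
    calc (j + 1 : ℝ) * binomialTerm m (j + 1) p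
        = (m.choose (j + 1) * (j + 1)) * p ^ (j + 1) * (1 - p) ^ (m - (j + 1)) := by
          rw [binomialTerm]; ring
      _ = X * ((m - j) * p) := by rw [hchoose, pow_succ]; ring
  have h2X : 2 * X ≤ binomialTerm m (j + 1) p := by
    refine le_of_mul_le_mul_left ?_ (by positivity : (0 : ℝ) < j + 1)
    calc (j + 1 : ℝ) * (2 * X) = X * (2 * (j + 1)) := by ring
      _ ≤ X * ((m - j) * p) := mul_le_mul_of_nonneg_left h hX
      _ = _ := hterm'.symm
  rw [hterm]
  nlinarith

lemma binomialTerm_le (m k : ℕ) {p : ℝ} (hp0 : 0 ≤ p) (hp1 : p ≤ 1) :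
    binomialTerm m k p ≤ (m * p) ^ k / k.factorial * exp (-((m - k : ℕ) * p)) := by
  have hexp : (1 - p) ^ (m - k) ≤ exp (-((m - k : ℕ) * p)) := by
    rw [neg_mul_eq_mul_neg, exp_nat_mul]
    exact pow_le_pow_left₀ (by linarith) (one_sub_le_exp_neg p) _
  calc binomialTerm m k p ≤ (m ^ k / k.factorial) * p ^ k * exp (-((m - k : ℕ) * p)) := by
        rw [binomialTerm]
        gcongr
        exact Nat.choose_le_pow_div k m
    _ = (m * p) ^ k / k.factorial * exp (-((m - k : ℕ) * p)) := by ring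

lemma add_pow_le_pow_mul_exp {L c : ℝ} (hL : 0 < L) (hc : 0 ≤ c) (k : ℕ) :
    (L + c) ^ k ≤ L ^ k * exp (k * c / L) := by
  have h : L + c ≤ L * exp (c / L) := by
    have := add_one_le_exp (c / L)
    rw [show L + c = L * (c / L + 1) by field_simp; ring]
    gcongr
  calc (L + c) ^ k ≤ (L * exp (c / L)) ^ k := pow_le_pow_left₀ (by linarith) h k
    _ = L ^ k * exp (k * c / L) := by rw [mul_pow, ← exp_nat_mul, mul_div_assoc]

lemma add_sq_div_sq_le {x v a V : ℝ} (hx : 0 ≤ x) (hxv : x ≤ a * v) (hV : 0 < V)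
    (hVv : V ≤ v) : (x + x ^ 2) / v ^ 2 ≤ a / V + a ^ 2 := by
  have hv : 0 < v := hV.trans_le hVv
  have hxa : x / v ≤ a := (div_le_iff₀ hv).2 hxv
  have ha : 0 ≤ a := (div_nonneg hx hv.le).trans hxa
  calc (x + x ^ 2) / v ^ 2 = x / v / v + (x / v) ^ 2 := by field_simp
    _ ≤ a / V + a ^ 2 := by
        gcongr ?_ + ?_
        · exact (div_le_div_of_nonneg_left (div_nonneg hx hv.le) hV hVv).trans
            (div_le_div_of_nonneg_right hxa hV.le)
        · exact pow_le_pow_left₀ (div_nonneg hx hv.le) hxa 2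

lemma succ_mul_factorial_pred_le (k : ℕ) : (k + 1) * (k - 1).factorial ≤ 2 * k.factorial := by
  rcases k with _ | k
  · simp
  · rw [Nat.add_sub_cancel, Nat.factorial_succ]
    nlinarith [Nat.factorial_pos k]

lemma factorial_le_factorial_mul_pow {a b : ℕ} (hab : a ≤ b) :
    b.factorial ≤ a.factorial * b ^ (b - a) := by
  have := Nat.factorial_mul_descFactorial (Nat.sub_le b a)
  rw [Nat.sub_sub_self hab] at this
  rw [← this]
  exact Nat.mul_le_mul_left _ (Nat.descFactorial_le_pow _ _)

section SecondMoment

variable {Ω V : Type*} [Fintype V] {A : V → Set Ω}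

lemma sq_card_setOf_mem_eq_sum_indicator_inter [∀ v, DecidablePred (· ∈ A v)] (ω : Ω) :
    (#{v | ω ∈ A v} : ℝ) ^ 2 = ∑ v, ∑ w, (A v ∩ A w).indicator 1 ω := by
  simp only [natCast_card_filter, sq, sum_mul_sum, Set.inter_indicator_one, Pi.mul_apply]
  simp [Set.indicator_apply]

variable [MeasurableSpace Ω] {μ : Measure Ω} [IsProbabilityMeasure μ]

lemma integral_sum_indicator_inter_le (hA : ∀ v, MeasurableSet (A v))
    (hindep : Pairwise fun v w => IndepSet (A v) (A w) μ) {r : ℝ} (hr : ∀ v, μ.real (A v) ≤ r) :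
    ∫ ω, ∑ v, ∑ w, (A v ∩ A w).indicator (1 : Ω → ℝ) ω ∂μ ≤
      Fintype.card V * r + (Fintype.card V * r) ^ 2 := by
  classical
  have hpair (v w : V) : μ.real (A v ∩ A w) ≤ (if v = w then r else 0) + r ^ 2 := by
    by_cases hvw : v = w
    · subst hvw
      simpa using (hr v).trans (le_add_of_nonneg_right (sq_nonneg r))
    · rw [if_neg hvw, zero_add, measureReal_def, (hindep hvw).measure_inter_eq_mul,
        ENNReal.toReal_mul, ← measureReal_def, ← measureReal_def, sq]
      exact mul_le_mul (hr v) (hr w) measureReal_nonneg (measureReal_nonneg.trans (hr v))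
  have hint (v w : V) : Integrable ((A v ∩ A w).indicator (1 : Ω → ℝ)) μ :=
    (integrable_const 1).indicator ((hA v).inter (hA w))
  calc ∫ ω, ∑ v, ∑ w, (A v ∩ A w).indicator (1 : Ω → ℝ) ω ∂μ
      = ∑ v, ∑ w, μ.real (A v ∩ A w) := by
        rw [integral_finsetSum _ fun v _ => integrable_finsetSum _ fun w _ => hint v w]
        refine sum_congr rfl fun v _ => ?_
        rw [integral_finsetSum _ fun w _ => hint v w]
        exact sum_congr rfl fun w _ => integral_indicator_one ((hA v).inter (hA w))
    _ ≤ ∑ v : V, ∑ w : V, ((if v = w then r else 0) + r ^ 2) :=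
        sum_le_sum fun v _ => sum_le_sum fun w _ => hpair v w
    _ = Fintype.card V * r + (Fintype.card V * r) ^ 2 := by
        simp only [sum_add_distrib, sum_ite_eq, mem_univ, if_true, sum_const, card_univ,
          nsmul_eq_mul]
        ring

lemma measureReal_lt_card_le_of_pairwise_indepSet [∀ v, DecidablePred (· ∈ A v)]
    (hA : ∀ v, MeasurableSet (A v)) (hindep : Pairwise fun v w => IndepSet (A v) (A w) μ)
    {r : ℝ} (hr : ∀ v, μ.real (A v) ≤ r) {t : ℝ} (ht : 0 < t) :
    μ.real {ω | t < #{v | ω ∈ A v}} ≤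
      (Fintype.card V * r + (Fintype.card V * r) ^ 2) / t ^ 2 := by
  have hsq : (fun ω => (#{v | ω ∈ A v} : ℝ) ^ 2) =
      fun ω => ∑ v, ∑ w, (A v ∩ A w).indicator 1 ω :=
    funext sq_card_setOf_mem_eq_sum_indicator_inter
  have hmarkov := mul_meas_ge_le_integral_of_nonneg (ae_of_all μ fun ω => sq_nonneg _)
    (by rw [hsq]; exact integrable_finsetSum _ fun v _ => integrable_finsetSum _ fun w _ =>
      (integrable_const 1).indicator ((hA v).inter (hA w))) (t ^ 2)
  have hsub : {ω | t < (#{v | ω ∈ A v} : ℝ)} ⊆ {ω | t ^ 2 ≤ (#{v | ω ∈ A v} : ℝ) ^ 2} :=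
    fun ω hω => pow_le_pow_left₀ ht.le (le_of_lt hω) 2
  rw [le_div_iff₀ (by positivity), mul_comm]
  calc t ^ 2 * μ.real {ω | t < (#{v | ω ∈ A v} : ℝ)}
      ≤ t ^ 2 * μ.real {ω | t ^ 2 ≤ (#{v | ω ∈ A v} : ℝ) ^ 2} :=
        mul_le_mul_of_nonneg_left (measureReal_mono hsub (measure_ne_top _ _)) (sq_nonneg t)
    _ ≤ ∫ ω, (#{v | ω ∈ A v} : ℝ) ^ 2 ∂μ := hmarkov
    _ ≤ _ := by rw [hsq]; exact integral_sum_indicator_inter_le hA hindep hr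

end SecondMoment

section BernoulliProduct

variable {ι : Type*} [Fintype ι] {ν : Measure Bool} [IsProbabilityMeasure ν]

lemma indepSet_pi_card_filter_le {S T : Finset ι} (hST : Disjoint S T) (k : ℕ) :
    IndepSet {ω | #(S.filter (ω · = true)) ≤ k} {ω | #(T.filter (ω · = true)) ≤ k}
      (Measure.pi fun _ : ι => ν) := by
  have hindep := (iIndepFun_pi (μ := fun _ : ι => ν) (X := fun _ => id)
    fun _ => aemeasurable_id).indepFun_finset S T hST fun i => measurable_pi_apply i
  have hcard (U : Finset ι) (ω : ι → Bool) :
      #(U.filter (ω · = true)) = #(univ.filter fun i : U => ω i = true) := by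
    simp only [card_filter]
    exact (sum_coe_sort U fun i => if ω i = true then 1 else 0).symm
  rw [indepSet_iff_measure_inter_eq_mul (Set.toFinite _).measurableSet
    (Set.toFinite _).measurableSet (Measure.pi fun _ : ι => ν)]
  simp only [hcard S, hcard T]
  exact hindep.measure_inter_preimage_eq_mul {g | #(univ.filter (g · = true)) ≤ k}
    {g | #(univ.filter (g · = true)) ≤ k} (Set.toFinite _).measurableSet
    (Set.toFinite _).measurableSet

variable [DecidableEq ι]

lemma measureReal_singleton_decide (P : Prop) [Decidable P] :
    ν.real {decide P} = if P then ν.real {true} else 1 - ν.real {true} := by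
  by_cases hP : P
  · simp [hP]
  · rw [decide_eq_false hP, if_neg hP, ← probReal_compl_eq_one_sub (measurableSet_singleton _)]
    congr
    ext b; cases b <;> simp

lemma measureReal_pi_filter_eq {S A : Finset ι} (hA : A ⊆ S) :
    (Measure.pi fun _ : ι => ν).real {ω | S.filter (ω · = true) = A} =
      ν.real {true} ^ #A * (1 - ν.real {true}) ^ (#S - #A) := by
  have hcyl : {ω : ι → Bool | S.filter (ω · = true) = A} =
      Set.univ.pi fun i => if i ∈ S then {decide (i ∈ A)} else Set.univ := by
    ext ω
    simp only [Set.mem_ofPred_eq, Set.mem_univ_pi, Finset.ext_iff, mem_filter]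
    refine forall_congr' fun i => ?_
    by_cases hi : i ∈ S <;> by_cases hiA : i ∈ A <;> simp [hi, hiA]
    exact absurd (hA hiA) hi
  rw [hcyl, measureReal_def, Measure.pi_pi, ENNReal.toReal_prod]
  simp_rw [← measureReal_def, apply_ite, measureReal_singleton_decide, probReal_univ]
  have hfilter : S.filter (· ∈ A) = A := by rw [filter_mem_eq_inter, inter_eq_right.mpr hA]
  rw [Finset.prod_ite_mem univ S, univ_inter, Finset.prod_ite, prod_const, prod_const, hfilter,
    filter_not, hfilter, card_sdiff_of_subset hA]

lemma measureReal_pi_card_filter_le (S : Finset ι) (k : ℕ) :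
    (Measure.pi fun _ : ι => ν).real {ω | #(S.filter (ω · = true)) ≤ k} ≤
      binomialTail #S k (ν.real {true}) := by
  have hsub : {ω : ι → Bool | #(S.filter (ω · = true)) ≤ k} ⊆
      ⋃ j ∈ range (k + 1), ⋃ A ∈ S.powersetCard j, {ω | S.filter (ω · = true) = A} := by
    intro ω hω
    simp only [Set.mem_iUnion, mem_range, mem_powersetCard]
    exact ⟨_, Nat.lt_succ_of_le hω, _, ⟨filter_subset _ _, rfl⟩, rfl⟩
  refine (measureReal_mono hsub (measure_ne_top _ _)).trans <|
    (measureReal_biUnion_finset_le _ _).trans <| sum_le_sum fun j _ => ?_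
  refine (measureReal_biUnion_finset_le _ _).trans_eq ?_
  rw [sum_congr rfl fun A hA => by
      rw [measureReal_pi_filter_eq (mem_powersetCard.1 hA).1, (mem_powersetCard.1 hA).2],
    sum_const, card_powersetCard, nsmul_eq_mul, binomialTerm, mul_assoc]

lemma measureReal_lt_card_card_filter_le {V : Type*} [Fintype V] {S : V → Finset ι}
    (hS : Pairwise (Disjoint on S)) {m : ℕ} (hm : ∀ v, #(S v) = m) (k : ℕ) {t : ℝ} (ht : 0 < t) :
    (Measure.pi fun _ : ι => ν).real {ω | t < #{v | #((S v).filter (ω · = true)) ≤ k}} ≤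
      (Fintype.card V * binomialTail m k (ν.real {true}) +
        (Fintype.card V * binomialTail m k (ν.real {true})) ^ 2) / t ^ 2 :=
  measureReal_lt_card_le_of_pairwise_indepSet (fun _ => (Set.toFinite _).measurableSet)
    (fun _ _ hvw => indepSet_pi_card_filter_le (hS hvw) k)
    (fun v => hm v ▸ measureReal_pi_card_filter_le (S v) k) ht

end BernoulliProduct

section Degrees

variable {n : ℕ}

/-- The arcs `(u, v)` with `u ≠ v`. -/
def arcsInto (v : Fin n) : Finset (Fin n × Fin n) :=
  (univ.erase v).map (Embedding.sectL (Fin n) v)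

def arcsFrom (v : Fin n) : Finset (Fin n × Fin n) :=
  (univ.erase v).map (Embedding.sectR v (Fin n))

lemma card_arcsInto (v : Fin n) : #(arcsInto v) = n - 1 := by simp [arcsInto]

lemma card_arcsFrom (v : Fin n) : #(arcsFrom v) = n - 1 := by simp [arcsFrom]

lemma pairwise_disjoint_arcsInto : Pairwise (Disjoint on (arcsInto : Fin n → _)) := by
  intro v w hvw
  simp only [Function.onFun, arcsInto, disjoint_left, Finset.mem_map]
  rintro _ ⟨u, -, rfl⟩ ⟨u', -, h⟩
  exact hvw (Prod.mk.inj h).2.symm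

lemma pairwise_disjoint_arcsFrom : Pairwise (Disjoint on (arcsFrom : Fin n → _)) := by
  intro v w hvw
  simp only [Function.onFun, arcsFrom, disjoint_left, Finset.mem_map]
  rintro _ ⟨u, -, rfl⟩ ⟨u', -, h⟩
  exact hvw (Prod.mk.inj h).1.symm

lemma inDeg_eq_card_filter (ω : Fin n × Fin n → Bool) (v : Fin n) :
    inDeg ω v = #((arcsInto v).filter (ω · = true)) := by
  rw [arcsInto, filter_map, card_map, inDeg]
  congr 1; ext u; simp [and_comm]

lemma outDeg_eq_card_filter (ω : Fin n × Fin n → Bool) (v : Fin n) :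
    outDeg ω v = #((arcsFrom v).filter (ω · = true)) := by
  rw [arcsFrom, filter_map, card_map, outDeg]
  congr 1; ext u; simp [and_comm]

instance (n : ℕ) (x : ℝ) : IsProbabilityMeasure (digraphMeasure n x) := by
  unfold digraphMeasure; infer_instance

lemma bernoulli_toMeasure_real_true {x : ℝ} (h0 : 0 ≤ x) (h1 : x ≤ 1) :
    (PMF.bernoulli (min x.toNNReal 1) (min_le_right _ _)).toMeasure.real {true} = x := by
  rw [measureReal_def, PMF.toMeasure_apply_singleton _ _ (measurableSet_singleton _),
    PMF.bernoulli_apply, cond_true, min_eq_left (Real.toNNReal_le_one.2 h1)]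
  simp [h0]

lemma digraphMeasure_real_lt_card_le {S : Fin n → Finset (Fin n × Fin n)}
    (hS : Pairwise (Disjoint on S)) (hcard : ∀ v, #(S v) = n - 1)
    {deg : (Fin n × Fin n → Bool) → Fin n → ℕ}
    (hdeg : ∀ ω v, deg ω v = #((S v).filter (ω · = true))) {x : ℝ} (h0 : 0 ≤ x) (h1 : x ≤ 1)
    (k : ℕ) {t : ℝ} (ht : 0 < t) :
    (digraphMeasure n x).real {ω | t < #{v | deg ω v ≤ k}} ≤
      (n * binomialTail (n - 1) k x + (n * binomialTail (n - 1) k x) ^ 2) / t ^ 2 := by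
  simp_rw [hdeg]
  have := measureReal_lt_card_card_filter_le hS hcard k ht
    (ν := (PMF.bernoulli (min x.toNNReal 1) (min_le_right _ _)).toMeasure)
  rwa [bernoulli_toMeasure_real_true h0 h1, Fintype.card_fin] at this

end Degrees

/-- The factor `4` comes from the tail being at most twice its last term and from
`(k + 1) (k - 1)! ≤ 2 k!`, `e` from `e^{(k+1)p} ≤ e`, and `e^{3(q-1)}` from
`(1 + (q - 1) log log n / log n)^k` with `k ≤ 3 log n / log log n`. -/
noncomputable def tailConst (q : ℕ) : ℝ := 4 * exp (1 + 3 * (q - 1))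

lemma tailConst_pos (q : ℕ) : 0 < tailConst q := by unfold tailConst; positivity

/-- Markov's inequality for `X_k²`, summed over the relevant `k` and over in- and out-degrees. -/
noncomputable def failureBound (q n : ℕ) : ℝ :=
  ∑ k ∈ Icc (q - 1) ⌊3 * log n / log (log n)⌋₊,
    2 * ((n * binomialTail (n - 1) k (pEll q n) + (n * binomialTail (n - 1) k (pEll q n)) ^ 2) /
      vkBound q n k ^ 2)

/-- Size conditions on `n` that hold eventually; the constants are convenient, not sharp. -/
structure IsLarge (q n : ℕ) : Prop where
  log_log_ge : 24 ≤ log (log n)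
  log_log_le : ((q : ℝ) - 1) * log (log n) ≤ log n
  log_sq_le : 4 * log n ^ 2 ≤ n

namespace IsLarge

variable {q n : ℕ} (h : IsLarge q n)
include h

lemma one_lt_log : 1 < log n := by
  by_contra! hL
  linarith [h.log_log_ge, log_nonpos (log_natCast_nonneg n) hL]

lemma log_log_le_log : log (log n) ≤ log n := by
  linarith [log_le_sub_one_of_pos (zero_lt_one.trans h.one_lt_log)]

lemma log_pos : 0 < log n := zero_lt_one.trans h.one_lt_log

lemma log_log_pos : 0 < log (log n) := by linarith [h.log_log_ge]

lemma pos : 0 < n := by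
  refine Nat.pos_of_ne_zero ?_
  rintro rfl
  linarith [h.log_log_ge, show log (log ((0 : ℕ) : ℝ)) = 0 by simp]

lemma natCast_pos : (0 : ℝ) < n := by exact_mod_cast h.pos

lemma exp_two_mul_smallomega : exp (2 * smallomega n) = log (log n) := by
  rw [smallomega, ← mul_assoc, mul_one_div_cancel two_ne_zero, one_mul,
    exp_log h.log_log_pos]

lemma smallomega_nonneg : 0 ≤ smallomega n := by
  rw [smallomega]
  have := log_nonneg (by linarith [h.log_log_ge] : (1 : ℝ) ≤ log (log n))
  positivity

lemma smallomega_le : smallomega n ≤ log (log n) / 2 := by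
  rw [smallomega]
  linarith [log_le_sub_one_of_pos h.log_log_pos]

lemma mul_pEll_eq : n * pEll q n = log n + (q - 1) * log (log n) - smallomega n := by
  rw [pEll, mul_div_cancel₀ _ h.natCast_pos.ne']

lemma half_log_le_mul_pEll (hq : 1 ≤ q) : log n / 2 ≤ n * pEll q n := by
  have hq' : (0 : ℝ) ≤ q - 1 := by rw [sub_nonneg]; exact_mod_cast hq
  rw [h.mul_pEll_eq]
  nlinarith [h.smallomega_le, h.log_log_le_log, h.log_log_ge]

lemma mul_pEll_le : n * pEll q n ≤ log n + (q - 1) * log (log n) := by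
  linarith [h.mul_pEll_eq, h.smallomega_nonneg]

lemma mul_pEll_le_two_mul_log : n * pEll q n ≤ 2 * log n := by
  linarith [h.mul_pEll_le, h.log_log_le]

lemma pEll_nonneg (hq : 1 ≤ q) : 0 ≤ pEll q n :=
  nonneg_of_mul_nonneg_right (by linarith [h.half_log_le_mul_pEll hq, h.one_lt_log])
    h.natCast_pos

lemma pEll_le_one : pEll q n ≤ 1 := by
  rw [← mul_le_mul_iff_of_pos_left h.natCast_pos, mul_one]
  nlinarith [h.mul_pEll_le_two_mul_log, h.log_sq_le, h.one_lt_log]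

lemma le_of_le_floor {k : ℕ} (hk : k ≤ ⌊3 * log n / log (log n)⌋₊) :
    (k : ℝ) ≤ 3 * log n / log (log n) :=
  (Nat.cast_le.2 hk).trans (Nat.floor_le (div_nonneg (by linarith [h.log_pos]) h.log_log_pos.le))

lemma eight_mul_le_log {k : ℕ} (hk : (k : ℝ) ≤ 3 * log n / log (log n)) : 8 * k ≤ log n := by
  rw [le_div_iff₀ h.log_log_pos] at hk
  nlinarith [h.log_log_ge, k.cast_nonneg (α := ℝ)]

lemma binomialTail_le_two_mul_binomialTerm (hq : 1 ≤ q) {k : ℕ}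
    (hk : (k : ℝ) ≤ 3 * log n / log (log n)) :
    binomialTail (n - 1) k (pEll q n) ≤ 2 * binomialTerm (n - 1) k (pEll q n) := by
  have hp0 := h.pEll_nonneg hq
  refine sum_range_succ_le_two_mul (binomialTerm_nonneg _ _ hp0 h.pEll_le_one)
    fun j hj => two_mul_binomialTerm_le hp0 h.pEll_le_one ?_
  have hjk : (j : ℝ) + 1 ≤ k := by exact_mod_cast hj
  have hk8 := h.eight_mul_le_log hk
  have hhalf : (n : ℝ) / 2 ≤ ((n - 1 : ℕ) : ℝ) - j := by
    rw [Nat.cast_sub h.pos, Nat.cast_one]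
    nlinarith [h.log_sq_le, h.one_lt_log]
  calc 2 * ((j : ℝ) + 1) ≤ log n / 2 / 2 := by linarith
    _ ≤ n * pEll q n / 2 := by linarith [h.half_log_le_mul_pEll hq]
    _ = n / 2 * pEll q n := by ring
    _ ≤ _ := mul_le_mul_of_nonneg_right hhalf hp0

lemma natCast_mul_exp_neg_mul_pEll (hq : 1 ≤ q) :
    n * exp (-(n * pEll q n)) = exp (smallomega n) / log n ^ (q - 1) := by
  rw [h.mul_pEll_eq, show -(log n + (q - 1) * log (log n) - smallomega n) =
      smallomega n - log n - ((q - 1 : ℕ) : ℝ) * log (log n) by push_cast [hq]; ring,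
    exp_sub, exp_sub, exp_log h.natCast_pos, exp_nat_mul, exp_log h.log_pos]
  field_simp [h.natCast_pos.ne']

lemma mul_pEll_pow_le (hq : 1 ≤ q) {k : ℕ} (hk : (k : ℝ) ≤ 3 * log n / log (log n)) :
    (n * pEll q n) ^ k ≤ log n ^ k * exp (3 * (q - 1)) := by
  have hq' : (0 : ℝ) ≤ q - 1 := by rw [sub_nonneg]; exact_mod_cast hq
  calc (n * pEll q n) ^ k ≤ (log n + (q - 1) * log (log n)) ^ k :=
        pow_le_pow_left₀ (by linarith [h.half_log_le_mul_pEll hq, h.log_pos]) h.mul_pEll_le k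
    _ ≤ log n ^ k * exp (k * ((q - 1) * log (log n)) / log n) :=
        add_pow_le_pow_mul_exp h.log_pos (mul_nonneg hq' h.log_log_pos.le) k
    _ ≤ log n ^ k * exp (3 * (q - 1)) := by
        gcongr
        rw [div_le_iff₀ h.log_pos, mul_left_comm, mul_assoc]
        rw [le_div_iff₀ h.log_log_pos] at hk
        exact mul_le_mul_of_nonneg_left hk hq' |>.trans_eq (by ring)

lemma natCast_mul_binomialTerm_le (hq : 1 ≤ q) {k : ℕ} (hk1 : q - 1 ≤ k)
    (hk : (k : ℝ) ≤ 3 * log n / log (log n)) :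
    n * binomialTerm (n - 1) k (pEll q n) ≤
      exp (1 + 3 * (q - 1)) * exp (smallomega n) * log n ^ (k - (q - 1)) / k.factorial := by
  set p := pEll q n
  have hn := h.natCast_pos
  have hp0 := h.pEll_nonneg hq
  have hk8 := h.eight_mul_le_log hk
  have hkn : k ≤ n - 1 := by
    have : (k : ℝ) < n := by nlinarith [h.log_sq_le, h.one_lt_log]
    exact Nat.le_sub_one_of_lt (by exact_mod_cast this)
  have hpow : (((n - 1 : ℕ) : ℝ) * p) ^ k ≤ log n ^ k * exp (3 * (q - 1)) :=
    (pow_le_pow_left₀ (by positivity) (by gcongr; exact_mod_cast Nat.sub_le n 1) k).trans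
      (h.mul_pEll_pow_le hq hk)
  have hexp : exp (-(((n - 1 - k : ℕ) : ℝ) * p)) ≤ exp (-(n * p)) * exp 1 := by
    have hkp : (k + 1) * p ≤ 1 := by
      have h2L : 2 * log n * p ≤ 1 := by
        rw [← mul_le_mul_iff_of_pos_left hn]
        nlinarith [h.mul_pEll_le_two_mul_log, h.log_sq_le]
      nlinarith [h.one_lt_log]
    rw [← exp_add, exp_le_exp, Nat.cast_sub hkn, Nat.cast_sub h.pos, Nat.cast_one]
    linarith
  calc n * binomialTerm (n - 1) k p
      ≤ n * ((((n - 1 : ℕ) : ℝ) * p) ^ k / k.factorial * exp (-(((n - 1 - k : ℕ) : ℝ) * p))) :=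
        mul_le_mul_of_nonneg_left (binomialTerm_le _ _ hp0 h.pEll_le_one) hn.le
    _ ≤ n * (log n ^ k * exp (3 * (q - 1)) / k.factorial * (exp (-(n * p)) * exp 1)) := by
        gcongr
    _ = exp (1 + 3 * (q - 1)) * (n * exp (-(n * p))) * log n ^ k / k.factorial := by
        rw [exp_add]; ring
    _ = exp (1 + 3 * (q - 1)) * exp (smallomega n) * log n ^ (k - (q - 1)) / k.factorial := by
        rw [h.natCast_mul_exp_neg_mul_pEll hq, pow_sub₀ _ h.log_pos.ne' hk1]
        ring

lemma log_log_mul_log_div_le_vkBound (hq : 1 ≤ q) {k : ℕ} (hk : (k : ℝ) ≤ 3 * log n / log (log n)) :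
    log (log n) * log n / (q - 1).factorial ≤ vkBound q n k := by
  have hL := h.log_pos
  have hM := h.log_log_pos
  have hfact : ((k - 1).factorial : ℝ) ≤ (q - 1).factorial * log n ^ (k - q) := by
    rcases le_or_gt (q - 1) (k - 1) with hqk | hkq
    · calc ((k - 1).factorial : ℝ) ≤ (q - 1).factorial * ((k - 1 : ℕ) : ℝ) ^ (k - 1 - (q - 1)) := by
            exact_mod_cast factorial_le_factorial_mul_pow hqk
        _ ≤ (q - 1).factorial * log n ^ (k - q) := by
            rw [show k - 1 - (q - 1) = k - q by omega]
            gcongr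
            exact (Nat.cast_le.2 (Nat.sub_le k 1)).trans (by linarith [h.eight_mul_le_log hk])
    · rw [show k - q = 0 by omega, pow_zero, mul_one]
      exact_mod_cast Nat.factorial_le hkq.le
  rw [vkBound, h.exp_two_mul_smallomega, pow_succ, div_le_div_iff₀ (by positivity)
    (by positivity)]
  calc log (log n) * log n * (k - 1).factorial
      ≤ log (log n) * log n * ((q - 1).factorial * log n ^ (k - q)) := by gcongr
    _ = _ := by ring

lemma vkBound_pos (hq : 1 ≤ q) {k : ℕ} (hk : (k : ℝ) ≤ 3 * log n / log (log n)) :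
    0 < vkBound q n k :=
  lt_of_lt_of_le (by have := h.log_pos; have := h.log_log_pos; positivity)
    (h.log_log_mul_log_div_le_vkBound hq hk)

lemma natCast_mul_binomialTail_le (hq : 1 ≤ q) {k : ℕ} (hk1 : q - 1 ≤ k)
    (hk : (k : ℝ) ≤ 3 * log n / log (log n)) :
    n * binomialTail (n - 1) k (pEll q n) ≤
      tailConst q / (k + 1) * exp (-smallomega n) * vkBound q n k := by
  rw [tailConst]
  set C := exp (1 + 3 * (q - 1))
  set w := smallomega n
  set X := log n ^ (k - q + 1)
  have hn := h.natCast_pos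
  have hfact : (1 : ℝ) / k.factorial ≤ 2 / ((k + 1) * (k - 1).factorial) := by
    rw [div_le_div_iff₀ (by positivity) (by positivity)]
    rw [one_mul]
    exact_mod_cast succ_mul_factorial_pred_le k
  calc n * binomialTail (n - 1) k (pEll q n)
      ≤ n * (2 * binomialTerm (n - 1) k (pEll q n)) :=
        mul_le_mul_of_nonneg_left (h.binomialTail_le_two_mul_binomialTerm hq hk) hn.le
    _ = 2 * (n * binomialTerm (n - 1) k (pEll q n)) := by ring
    _ ≤ 2 * (C * exp w * log n ^ (k - (q - 1)) / k.factorial) := by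
        gcongr; exact h.natCast_mul_binomialTerm_le hq hk1 hk
    _ ≤ 2 * (C * exp w * X / k.factorial) := by
        gcongr
        exact pow_le_pow_right₀ h.one_lt_log.le (by omega)
    _ = 2 * C * exp w * X * (1 / k.factorial) := by ring
    _ ≤ 2 * C * exp w * X * (2 / ((k + 1) * (k - 1).factorial)) := by gcongr
    _ = 4 * C / (k + 1) * (exp (-w) * exp (2 * w)) * X / (k - 1).factorial := by
        rw [← exp_add, show -w + 2 * w = w by ring]
        field_simp
        ring
    _ = 4 * C / (k + 1) * exp (-w) * vkBound q n k := by rw [vkBound]; ring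

lemma failureBound_term_le (hq : 1 ≤ q) {k : ℕ} (hk1 : q - 1 ≤ k)
    (hk : (k : ℝ) ≤ 3 * log n / log (log n)) :
    (n * binomialTail (n - 1) k (pEll q n) + (n * binomialTail (n - 1) k (pEll q n)) ^ 2) /
        vkBound q n k ^ 2 ≤
      tailConst q * (q - 1).factorial / (log (log n) * log n) +
        tailConst q ^ 2 / log (log n) * (1 / ((k : ℝ) + 1) ^ 2) := by
  set c := tailConst q
  have hc : 0 < c := tailConst_pos q
  set M := log (log n)
  have hL := h.log_pos
  have hM : 0 < M := h.log_log_pos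
  have hw : exp (-smallomega n) ≤ 1 := exp_le_one_iff.2 (by linarith [h.smallomega_nonneg])
  have hbound := add_sq_div_sq_le (mul_nonneg h.natCast_pos.le
    (sum_nonneg fun j _ => binomialTerm_nonneg _ j (h.pEll_nonneg hq) h.pEll_le_one))
    (h.natCast_mul_binomialTail_le hq hk1 hk) (by positivity)
    (h.log_log_mul_log_div_le_vkBound hq hk)
  refine hbound.trans (add_le_add ?_ (le_of_eq ?_))
  · rw [div_div_eq_mul_div, div_le_div_iff_of_pos_right (by positivity)]
    gcongr
    calc c / (k + 1) * exp (-smallomega n) ≤ c / 1 * 1 := by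
          gcongr
          · linarith [k.cast_nonneg (α := ℝ)]
      _ = c := by ring
  · rw [mul_pow, div_pow, ← exp_nat_mul, show ((2 : ℕ) : ℝ) * -smallomega n = -(2 * smallomega n) by
      push_cast; ring, exp_neg, h.exp_two_mul_smallomega]
    ring

lemma failureBound_le (hq : 1 ≤ q) :
    failureBound q n ≤
      (8 * tailConst q * (q - 1).factorial +
        2 * tailConst q ^ 2 * ∑' k : ℕ, 1 / ((k : ℝ) + 1) ^ 2) / log (log n) := by
  set c := tailConst q
  have hc : 0 < c := tailConst_pos q
  set M := log (log n)
  set K := ⌊3 * log n / M⌋₊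
  have hL := h.log_pos
  have hM : 0 < M := h.log_log_pos
  have hsum : Summable fun k : ℕ => 1 / ((k : ℝ) + 1) ^ 2 := by
    have := (summable_nat_add_iff 1).2 (Real.summable_one_div_nat_pow.2 one_lt_two)
    exact_mod_cast this
  have hcard : (#(Icc (q - 1) K) : ℝ) ≤ 4 * log n / M := by
    have hK : (K : ℝ) ≤ 3 * log n / M := Nat.floor_le (by positivity)
    have : (#(Icc (q - 1) K) : ℝ) ≤ K + 1 := by
      rw [Nat.card_Icc]; exact_mod_cast Nat.sub_le _ _
    have : 1 ≤ log n / M := (one_le_div hM).2 h.log_log_le_log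
    linarith [show 4 * log n / M = 3 * log n / M + log n / M by ring]
  calc failureBound q n
      ≤ ∑ k ∈ Icc (q - 1) K, 2 * (c * (q - 1).factorial / (M * log n) +
          c ^ 2 / M * (1 / ((k : ℝ) + 1) ^ 2)) := by
        refine sum_le_sum fun k hk => ?_
        rw [mem_Icc] at hk
        gcongr
        exact h.failureBound_term_le hq hk.1 (h.le_of_le_floor hk.2)
    _ = 2 * #(Icc (q - 1) K) * (c * (q - 1).factorial / (M * log n)) +
          2 * (c ^ 2 / M) * ∑ k ∈ Icc (q - 1) K, 1 / ((k : ℝ) + 1) ^ 2 := by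
        rw [← mul_sum, sum_add_distrib, sum_const, nsmul_eq_mul, ← mul_sum]; ring
    _ ≤ 2 * (4 * log n / M) * (c * (q - 1).factorial / (M * log n)) +
          2 * (c ^ 2 / M) * ∑' k : ℕ, 1 / ((k : ℝ) + 1) ^ 2 := by
        gcongr
        exact hsum.sum_le_tsum _ fun k _ => by positivity
    _ = 8 * c * (q - 1).factorial / M / M + 2 * c ^ 2 * (∑' k : ℕ, 1 / ((k : ℝ) + 1) ^ 2) / M := by
        field_simp
        ring
    _ ≤ 8 * c * (q - 1).factorial / M + 2 * c ^ 2 * (∑' k : ℕ, 1 / ((k : ℝ) + 1) ^ 2) / M := by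
        gcongr
        exact div_le_self (by positivity) (by linarith [h.log_log_ge])
    _ = _ := by ring

end IsLarge

lemma eventually_isLarge (q : ℕ) : ∀ᶠ n : ℕ in atTop, IsLarge q n := by
  have hn : Tendsto (fun n : ℕ => (n : ℝ)) atTop atTop := tendsto_natCast_atTop_atTop
  have hL := tendsto_log_atTop.comp hn
  have hlog : ∀ᶠ y in atTop, (q : ℝ) * log y ≤ y := by
    filter_upwards [isLittleO_log_id_atTop.bound (inv_pos.2 (by positivity : (0 : ℝ) < q + 1)),
      eventually_ge_atTop 0] with y hy hy0
    rw [norm_eq_abs, norm_eq_abs, id, abs_of_nonneg hy0, inv_mul_eq_div,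
      le_div_iff₀ (by positivity)] at hy
    nlinarith [le_abs_self (log y), abs_nonneg (log y)]
  have hsq : ∀ᶠ y in atTop, 4 * log y ^ 2 ≤ y := by
    filter_upwards [(isLittleO_pow_log_id_atTop (n := 2)).bound (by norm_num : (0 : ℝ) < 1 / 4),
      eventually_ge_atTop 0] with y hy hy0
    rw [norm_eq_abs, norm_eq_abs, id, abs_of_nonneg hy0, abs_of_nonneg (sq_nonneg _)] at hy
    linarith
  filter_upwards [(tendsto_log_atTop.comp hL).eventually_ge_atTop 24, hL.eventually hlog,
    hn.eventually hsq] with n h1 h2 h3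
  exact ⟨h1, by simp only [Function.comp] at h1 h2; nlinarith, h3⟩

lemma tendsto_failureBound (q : ℕ) (hq : 1 ≤ q) : Tendsto (failureBound q) atTop (𝓝 0) := by
  refine squeeze_zero' ((eventually_isLarge q).mono fun n h => ?_)
    ((eventually_isLarge q).mono fun n h => h.failureBound_le hq)
    (tendsto_const_nhds.div_atTop (tendsto_log_atTop.comp
      (tendsto_log_atTop.comp tendsto_natCast_atTop_atTop)))
  refine sum_nonneg fun k _ => ?_
  have := sum_nonneg fun j (_ : j ∈ range (k + 1)) =>
    binomialTerm_nonneg (n - 1) j (h.pEll_nonneg hq) h.pEll_le_one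
  unfold binomialTail
  positivity

def fewLowDegreeVertices (q n : ℕ) : Set (Fin n × Fin n → Bool) :=
  {ω | ∀ k : ℕ, q - 1 ≤ k → (k : ℝ) ≤ 3 * log n / log (log n) →
    (#{v | inDeg ω v ≤ k} : ℝ) ≤ vkBound q n k ∧ (#{v | outDeg ω v ≤ k} : ℝ) ≤ vkBound q n k}

lemma IsLarge.one_sub_failureBound_le {q n : ℕ} (h : IsLarge q n) (hq : 1 ≤ q) :
    1 - failureBound q n ≤ (digraphMeasure n (pEll q n)).real (fewLowDegreeVertices q n) := by
  set G := fewLowDegreeVertices q n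
  have hbad : Gᶜ ⊆ ⋃ k ∈ Icc (q - 1) ⌊3 * log n / log (log n)⌋₊,
      ({ω | vkBound q n k < #{v | inDeg ω v ≤ k}} ∪
        {ω | vkBound q n k < #{v | outDeg ω v ≤ k}}) := by
    intro ω hω
    simp only [G, fewLowDegreeVertices, Set.mem_compl_iff, Set.mem_ofPred_eq, not_forall,
      not_and_or, not_le] at hω
    obtain ⟨k, hk1, hk, hkω⟩ := hω
    exact Set.mem_biUnion (mem_Icc.2 ⟨hk1, Nat.le_floor hk⟩) hkω
  have hGc : (digraphMeasure n (pEll q n)).real Gᶜ ≤ failureBound q n := by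
    refine (measureReal_mono hbad (measure_ne_top _ _)).trans <|
      (measureReal_biUnion_finset_le _ _).trans <| sum_le_sum fun k hk => ?_
    have hv := h.vkBound_pos hq (h.le_of_le_floor (mem_Icc.1 hk).2)
    rw [two_mul]
    exact (measureReal_union_le _ _).trans <| add_le_add
      (digraphMeasure_real_lt_card_le pairwise_disjoint_arcsInto card_arcsInto
        inDeg_eq_card_filter (h.pEll_nonneg hq) h.pEll_le_one k hv)
      (digraphMeasure_real_lt_card_le pairwise_disjoint_arcsFrom card_arcsFrom
        outDeg_eq_card_filter (h.pEll_nonneg hq) h.pEll_le_one k hv)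
  rw [probReal_compl_eq_one_sub (Set.toFinite G).measurableSet] at hGc
  linarith

/-- W.h.p. in `D_{n,p_ℓ}`, simultaneously for every `k` with
`q - 1 ≤ k ≤ 3 log n / log log n`, there are at most
`v_k = e^{2ω(n)} (log n)^{k-q+1}/(k-1)!` vertices of in-degree at most `k`, and
at most `v_k` vertices of out-degree at most `k`. -/
theorem stmt6 (q : ℕ) (hq : 1 ≤ q) :
    Tendsto (fun n : ℕ =>
      ((digraphMeasure n (pEll q n))
        {ω | ∀ k : ℕ, q - 1 ≤ k → (k : ℝ) ≤ 3 * Real.log n / Real.log (Real.log n) →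
          ((Finset.univ.filter fun v : Fin n => inDeg ω v ≤ k).card : ℝ) ≤ vkBound q n k ∧
          ((Finset.univ.filter fun v : Fin n => outDeg ω v ≤ k).card : ℝ) ≤ vkBound q n k}).toReal)
      atTop (nhds 1) := by
  refine tendsto_of_tendsto_of_tendsto_of_le_of_le' (g := fun n => 1 - failureBound q n)
    (by simpa using tendsto_const_nhds.sub (tendsto_failureBound q hq)) tendsto_const_nhds
    ((eventually_isLarge q).mono fun n h => h.one_sub_failureBound_le hq)
    (Eventually.of_forall fun n => ?_)
  exact ENNReal.toReal_le_of_le_ofReal zero_le_one (by simpa using prob_le_one)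
end

section
/- Let F be a random variable equal to the number of cycles of a uniformly random derangement of [n]. Then with probability 1 − o(1) as n → ∞, F ≤ 2 log n. -/
/-!
A permutation `σ` fixes, under the pointwise action on finsets, every union of supports of its
cycles, so `2 ^ c(σ) ≤ #Fix(σ)`. By Burnside, `∑ σ, #Fix(σ) = n! · #orbits`, and the orbits of
`Perm α` on finsets are the `n + 1` cardinality classes; hence `∑ σ, 2 ^ c(σ) ≤ (n + 1)!`.
Markov's inequality then bounds the number of permutations with more than `2 log n` cycles by
`(n + 1)! / n ^ (2 log 2) = o(n!)`, as `2 log 2 > 1`. Derangements are a fraction `→ e⁻¹` of all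
permutations, so among them, too, this proportion tends to `0`.
-/

open Equiv Finset MulAction Filter Topology
open scoped Pointwise Nat

section
variable {α : Type*} [Fintype α] [DecidableEq α]

lemma card_orbitRel_quotient_perm_finset_le :
    Nat.card (orbitRel.Quotient (Perm α) (Finset α)) ≤ Fintype.card α + 1 := by
  let card : orbitRel.Quotient (Perm α) (Finset α) → Fin (Fintype.card α + 1) :=
    Quotient.lift (fun A => ⟨#A, Nat.lt_succ_of_le A.card_le_univ⟩) <| by
      rintro _ A ⟨σ, rfl⟩
      simp [card_smul_finset]
  have hcard : card.Injective := by
    rintro ⟨A⟩ ⟨B⟩ h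
    have hAB : #B = #A := congrArg Fin.val h.symm
    obtain ⟨σ, hσ⟩ := (Set.powersetCard.isPretransitive (α := α) (n := #A)).exists_smul_eq
      (Set.powersetCard.ofCard hAB) (Set.powersetCard.ofCard rfl)
    exact Quotient.sound ⟨σ, congrArg Subtype.val hσ⟩
  simpa using Nat.card_le_card_of_injective card hcard

lemma sum_card_fixedBy_perm_finset_le :
    ∑ σ : Perm α, Nat.card (fixedBy (Finset α) σ) ≤ (Fintype.card α + 1)! := by
  classical
  simp_rw [Nat.card_eq_fintype_card]
  rw [sum_card_fixedBy_eq_card_orbits_mul_card_group, Fintype.card_perm, Nat.factorial_succ,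
    ← Nat.card_eq_fintype_card]
  exact Nat.mul_le_mul_right _ card_orbitRel_quotient_perm_finset_le

lemma smul_biUnion_support_eq {σ : Perm α} {T : Finset (Perm α)}
    (hT : T ⊆ σ.cycleFactorsFinset) : σ • T.biUnion Perm.support = T.biUnion Perm.support := by
  ext x
  simp only [mem_smul_finset, mem_biUnion, Perm.smul_def]
  constructor
  · rintro ⟨y, ⟨c, hc, hy⟩, rfl⟩
    exact ⟨c, hc, (Perm.mem_cycleFactorsFinset_support (hT hc) y).2 hy⟩
  · rintro ⟨c, hc, hx⟩
    refine ⟨σ⁻¹ x, ⟨c, hc, (Perm.mem_cycleFactorsFinset_support (hT hc) _).1 ?_⟩, by simp⟩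
    simpa using hx

lemma injOn_biUnion_support_powerset_cycleFactorsFinset (σ : Perm α) :
    Set.InjOn (fun T : Finset (Perm α) => T.biUnion Perm.support)
      (σ.cycleFactorsFinset.powerset : Set (Finset (Perm α))) := by
  have hdisj : (σ.cycleFactorsFinset : Set (Perm α)).PairwiseDisjoint
      (fun c => (c.support : Set α)) :=
    σ.cycleFactorsFinset_pairwise_disjoint.mono' fun _ _ h =>
      Finset.disjoint_coe.2 (Perm.disjoint_iff_disjoint_support.1 h)
  have hne : ∀ c ∈ (σ.cycleFactorsFinset : Set (Perm α)), (c.support : Set α).Nonempty :=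
    fun c hc => Finset.coe_nonempty.2 (Perm.mem_cycleFactorsFinset_iff.1 hc).1.nonempty_support
  intro T hT T' hT' h
  simp only [coe_powerset, Set.mem_preimage, Set.mem_powerset_iff, coe_subset] at hT hT'
  have hunion : ⋃ c ∈ (T : Set (Perm α)), (c.support : Set α) =
      ⋃ c ∈ (T' : Set (Perm α)), (c.support : Set α) := by
    simpa using congrArg ((↑) : Finset α → Set α) h
  have hTT' := (hdisj.subset (Set.union_subset hT hT')).subset_of_biUnion_subset_biUnion
    (fun c hc => hne c (hT hc)) hunion.subset
  have hT'T := (hdisj.subset (Set.union_subset hT' hT)).subset_of_biUnion_subset_biUnion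
    (fun c hc => hne c (hT' hc)) hunion.superset
  exact (coe_subset.1 hTT').antisymm (coe_subset.1 hT'T)

lemma two_pow_card_cycleFactorsFinset_le (σ : Perm α) :
    2 ^ #σ.cycleFactorsFinset ≤ Nat.card (fixedBy (Finset α) σ) := by
  classical
  rw [← card_powerset, Nat.card_eq_card_toFinset]
  refine card_le_card_of_injOn _ (fun T hT => ?_)
    (injOn_biUnion_support_powerset_cycleFactorsFinset σ)
  simpa using smul_biUnion_support_eq (mem_powerset.1 hT)

lemma sum_two_pow_card_cycleFactorsFinset_le :
    ∑ σ : Perm α, 2 ^ #σ.cycleFactorsFinset ≤ (Fintype.card α + 1)! :=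
  (sum_le_sum fun σ _ => two_pow_card_cycleFactorsFinset_le σ).trans
    sum_card_fixedBy_perm_finset_le

lemma card_filter_lt_card_cycleFactorsFinset_mul_le (s : Finset (Perm α)) (t : ℝ) :
    (#{σ ∈ s | t < #σ.cycleFactorsFinset} : ℝ) * 2 ^ t ≤ (Fintype.card α + 1)! :=
  calc (#{σ ∈ s | t < #σ.cycleFactorsFinset} : ℝ) * 2 ^ t
      ≤ ∑ σ ∈ s with t < #σ.cycleFactorsFinset, (2 : ℝ) ^ #σ.cycleFactorsFinset := by
        rw [← nsmul_eq_mul]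
        refine card_nsmul_le_sum _ _ _ fun σ hσ => ?_
        rw [← Real.rpow_natCast]
        exact Real.rpow_le_rpow_of_exponent_le one_le_two (mem_filter.1 hσ).2.le
    _ ≤ ∑ σ : Perm α, (2 : ℝ) ^ #σ.cycleFactorsFinset :=
        sum_le_sum_of_subset_of_nonneg (subset_univ _) fun _ _ _ => by positivity
    _ ≤ (Fintype.card α + 1)! := by exact_mod_cast sum_two_pow_card_cycleFactorsFinset_le

end

lemma two_rpow_two_mul_log {x : ℝ} (hx : 0 < x) :
    (2 : ℝ) ^ (2 * Real.log x) = x ^ (2 * Real.log 2) := by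
  rw [Real.rpow_def_of_pos two_pos, Real.rpow_def_of_pos hx]
  ring_nf

lemma tendsto_natCast_add_one_div_rpow_atTop {a : ℝ} (ha : 1 < a) :
    Tendsto (fun n : ℕ => ((n : ℝ) + 1) / n ^ a) atTop (𝓝 0) := by
  have hlim : Tendsto (fun n : ℕ => 2 * (n : ℝ) ^ (-(a - 1))) atTop (𝓝 0) := by
    have := ((tendsto_rpow_neg_atTop (by linarith : 0 < a - 1)).comp
      tendsto_natCast_atTop_atTop).const_mul (2 : ℝ)
    rwa [mul_zero] at this
  refine tendsto_of_tendsto_of_tendsto_of_le_of_le' tendsto_const_nhds hlim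
    (Eventually.of_forall fun n => by positivity) ?_
  filter_upwards [eventually_ge_atTop 1] with n hn
  have hn' : (1 : ℝ) ≤ n := mod_cast hn
  rw [neg_sub, Real.rpow_sub (by linarith), Real.rpow_one, mul_div_assoc']
  exact div_le_div_of_nonneg_right (by linarith) (by positivity)

lemma tendsto_card_filter_lt_card_cycleFactorsFinset_div_factorial
    (s : ∀ n, Finset (Perm (Fin n))) :
    Tendsto (fun n : ℕ => (#{σ ∈ s n | 2 * Real.log n < #σ.cycleFactorsFinset} : ℝ) / n !)
      atTop (𝓝 0) := by
  have ha : 1 < 2 * Real.log 2 := by linarith [Real.log_two_gt_d9]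
  refine tendsto_of_tendsto_of_tendsto_of_le_of_le' tendsto_const_nhds
    (tendsto_natCast_add_one_div_rpow_atTop ha) (Eventually.of_forall fun n => by positivity) ?_
  filter_upwards [eventually_ge_atTop 1] with n hn
  have hn' : (0 : ℝ) < n := mod_cast hn
  have hmarkov := card_filter_lt_card_cycleFactorsFinset_mul_le (s n) (2 * Real.log n)
  rw [two_rpow_two_mul_log hn', Fintype.card_fin, Nat.factorial_succ, Nat.cast_mul] at hmarkov
  rw [div_le_div_iff₀ (by positivity) (by positivity)]
  push_cast at hmarkov ⊢
  linarith

/-- W.h.p. a uniformly random derangement of `[n]` has at most `2 log n`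
cycles. -/
theorem stmt13 :
    Tendsto (fun n : ℕ =>
      (Nat.card {σ : Equiv.Perm (Fin n) // (∀ v, σ v ≠ v) ∧
          ((σ.cycleFactorsFinset.card : ℝ) ≤ 2 * Real.log n)} : ℝ) /
        (Nat.card {σ : Equiv.Perm (Fin n) // ∀ v, σ v ≠ v} : ℝ))
      atTop (nhds 1) := by
  let ders n : Finset (Perm (Fin n)) := {σ | ∀ v, σ v ≠ v}
  have hders : Tendsto (fun n : ℕ => (#(ders n) : ℝ) / n !) atTop (𝓝 (Real.exp (-1))) := by
    convert numDerangements_tendsto_inv_e using 4 with n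
    rw [← card_derangements_fin_eq_numDerangements, ← Fintype.card_subtype]
    exact Fintype.card_congr (Equiv.refl _)
  have hgood : Tendsto (fun n : ℕ =>
      (#{σ ∈ ders n | ¬ 2 * Real.log n < #σ.cycleFactorsFinset} : ℝ) / n !)
      atTop (𝓝 (Real.exp (-1))) := by
    have hdiff := hders.sub (tendsto_card_filter_lt_card_cycleFactorsFinset_div_factorial ders)
    rw [sub_zero] at hdiff
    refine hdiff.congr fun n => ?_
    rw [← sub_div, ← card_filter_add_card_filter_not
      (s := ders n) (fun σ => 2 * Real.log n < #σ.cycleFactorsFinset)]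
    push_cast
    ring
  have hratio := hgood.div hders (Real.exp_pos _).ne'
  rw [div_self (Real.exp_pos _).ne'] at hratio
  refine hratio.congr fun n => ?_
  rw [Pi.div_apply, div_div_div_cancel_right₀ (by positivity)]
  simp only [ders, not_lt, Nat.card_eq_fintype_card, Fintype.card_subtype, filter_filter]
end
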